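/- For every even positive integer k, if G1 and G2 are both paths on k+2 vertices, then α_k(G1 × G2) = 4 = α_k(G1) · α_k(G2). -/

import Mathlib

open SimpleGraph

/-- The `k`-independence number: the maximum size of a set of vertices at pairwise
distance greater than `k`. -/
noncomputable def kIndepNum {V : Type*} [Fintype V] (G : SimpleGraph V) (k : ℕ) : ℕ :=
  sSup {n | ∃ s : Finset V, s.card = n ∧ ∀ u ∈ s, ∀ v ∈ s, u ≠ v → (k : ℕ∞) < G.edist u v}

/-- The tensor (direct / categorical) product of two simple graphs. -/
def tensorProd {V1 V2 : Type*} (G1 : SimpleGraph V1) (G2 : SimpleGraph V2) :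
    SimpleGraph (V1 × V2) where
  Adj a b := G1.Adj a.1 b.1 ∧ G2.Adj a.2 b.2
  symm := by constructor; intro a b ⟨h1, h2⟩; exact ⟨h1.symm, h2.symm⟩
  loopless := by constructor; intro a ⟨h1, _⟩; exact G1.irrefl h1

/-! A walk of length `n` in the tensor product is a pair of walks of length `n` in the factors,
and in a path with at least two vertices there is a walk of length `n` from `i` to `i'` exactly
when `n ≥ |i - i'|` and `n ≡ |i - i'| (mod 2)`; this gives the distance formula for the tensor
product of two paths. The endpoints of `P_{k+2}` are `k + 1` apart while all other vertices lie
within `k` of each other, so `α_k(P_{k+2}) = 2`. In the product the four corners are pairwise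
either `k + 1` apart or unreachable (as `k + 1` is odd), and since `k` is even, any two vertices
whose coordinates have the same parities are within distance `k`, so `α_k = 4`. -/

namespace SimpleGraph

variable {V : Type*}

def IsKIndepSet (G : SimpleGraph V) (k : ℕ) (s : Set V) : Prop :=
  s.Pairwise fun u v => (k : ℕ∞) < G.edist u v

theorem IsKIndepSet.card_le {α : Type*} {G : SimpleGraph V} {k : ℕ} {s : Finset V}
    {t : Finset α} (hs : G.IsKIndepSet k s) (f : V → α) (hf : ∀ u ∈ s, f u ∈ t)
    (hclose : ∀ u ∈ s, ∀ v ∈ s, f u = f v → G.edist u v ≤ k) : s.card ≤ t.card :=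
  Finset.card_le_card_of_injOn f hf fun u hu v hv huv =>
    by_contra fun hne => (hs hu hv hne).not_ge (hclose u hu v hv huv)

end SimpleGraph

open SimpleGraph

theorem kIndepNum_eq_card {V : Type*} [Fintype V] {G : SimpleGraph V} {k : ℕ} {s : Finset V}
    (hs : G.IsKIndepSet k s) (hmax : ∀ t : Finset V, G.IsKIndepSet k t → t.card ≤ s.card) :
    kIndepNum G k = s.card :=
  IsGreatest.csSup_eq ⟨⟨s, rfl, fun _ hu _ hv => hs hu hv⟩,
    by rintro _ ⟨t, rfl, ht⟩; exact hmax t fun u hu v hv => ht u hu v hv⟩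

section PathGraph

variable {m : ℕ}

theorem pathGraph_dist_le_length {a b : Fin m} (w : (pathGraph m).Walk a b) :
    Nat.dist a b ≤ w.length := by
  induction w with
  | nil => simp [Nat.dist_self]
  | cons h _ ih =>
    rcases pathGraph_adj.mp h with h | h <;>
      · simp only [Walk.length_cons, Nat.dist] at ih ⊢; omega

theorem pathGraph_length_mod_two {a b : Fin m} (w : (pathGraph m).Walk a b) :
    w.length % 2 = Nat.dist a b % 2 := by
  induction w with
  | nil => simp [Nat.dist_self]
  | cons h _ ih =>
    rcases pathGraph_adj.mp h with h | h <;>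
      · simp only [Walk.length_cons, Nat.dist] at ih ⊢; omega

theorem pathGraph_exists_walk_length (hm : 2 ≤ m) {n : ℕ} :
    ∀ {a b : Fin m}, Nat.dist a b ≤ n → n % 2 = Nat.dist a b % 2 →
      ∃ w : (pathGraph m).Walk a b, w.length = n := by
  induction n with
  | zero =>
    intro a b hd _
    obtain rfl : a = b := Fin.ext (Nat.eq_of_dist_eq_zero (Nat.le_zero.mp hd))
    exact ⟨.nil, rfl⟩
  | succ n ih =>
    intro a b hd hpar
    -- Step towards `b`, or to any neighbour when `a = b`.
    obtain ⟨a', hadj, hd'⟩ : ∃ a' : Fin m, (pathGraph m).Adj a a' ∧ Nat.dist a' b ≤ n := by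
      simp only [Nat.dist] at hd hpar ⊢
      by_cases hup : (a : ℕ) < b ∨ (a = b ∧ (a : ℕ) + 1 < m)
      · exact ⟨⟨a + 1, by omega⟩, pathGraph_adj.mpr (.inl rfl), by simp only; omega⟩
      · refine ⟨⟨a - 1, by omega⟩, pathGraph_adj.mpr (.inr ?_), by simp only; omega⟩
        simp only; omega
    have hpar' : n % 2 = Nat.dist a' b % 2 := by
      rcases pathGraph_adj.mp hadj with h | h <;> · simp only [Nat.dist] at hpar ⊢; omega
    obtain ⟨w, hw⟩ := ih hd' hpar'
    exact ⟨.cons hadj w, by simp [hw]⟩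

theorem pathGraph_edist (a b : Fin m) : (pathGraph m).edist a b = Nat.dist a b := by
  rcases lt_or_ge m 2 with hm | hm
  · obtain rfl : a = b := Fin.ext (by omega)
    simp [Nat.dist_self]
  · obtain ⟨w, hw⟩ := pathGraph_exists_walk_length hm le_rfl rfl
    exact le_antisymm (hw ▸ edist_le w)
      (le_iInf fun w => by exact_mod_cast pathGraph_dist_le_length w)

end PathGraph

section TensorProd

variable {V₁ V₂ : Type*} {G₁ : SimpleGraph V₁} {G₂ : SimpleGraph V₂}

def tensorProd.fst : tensorProd G₁ G₂ →g G₁ := ⟨Prod.fst, And.left⟩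

def tensorProd.snd : tensorProd G₁ G₂ →g G₂ := ⟨Prod.snd, And.right⟩

theorem tensorProd_exists_walk_of_length_eq {a₁ b₁ : V₁} (w₁ : G₁.Walk a₁ b₁) :
    ∀ {a₂ b₂ : V₂} (w₂ : G₂.Walk a₂ b₂), w₁.length = w₂.length →
      ∃ w : (tensorProd G₁ G₂).Walk (a₁, a₂) (b₁, b₂), w.length = w₁.length := by
  induction w₁ with
  | nil =>
    rintro _ _ (_ | _) h
    · exact ⟨.nil, rfl⟩
    · simp at h
  | cons h₁ _ ih =>
    rintro _ _ (_ | ⟨h₂, w₂⟩) h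
    · simp at h
    · obtain ⟨w, hw⟩ := ih w₂ (by simpa using h)
      exact ⟨.cons (show (tensorProd G₁ G₂).Adj _ _ from ⟨h₁, h₂⟩) w,
        by rw [Walk.length_cons, hw, Walk.length_cons]⟩

theorem edist_tensorProd_pathGraph {m n : ℕ} (hm : 2 ≤ m) (hn : 2 ≤ n) (a b : Fin m × Fin n) :
    (tensorProd (pathGraph m) (pathGraph n)).edist a b =
      if Nat.dist a.1 b.1 % 2 = Nat.dist a.2 b.2 % 2 then
        ((max (Nat.dist a.1 b.1) (Nat.dist a.2 b.2) : ℕ) : ℕ∞)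
      else ⊤ := by
  split_ifs with hpar
  · obtain ⟨w₁, hw₁⟩ := pathGraph_exists_walk_length hm (a := a.1) (b := b.1)
      (le_max_left _ (Nat.dist a.2 b.2)) (by omega)
    obtain ⟨w₂, hw₂⟩ := pathGraph_exists_walk_length hn (a := a.2) (b := b.2)
      (le_max_right (Nat.dist a.1 b.1) _) (by omega)
    obtain ⟨w, hw⟩ := tensorProd_exists_walk_of_length_eq w₁ w₂ (hw₁.trans hw₂.symm)
    refine le_antisymm ((edist_le w).trans_eq (by rw [hw, hw₁])) (le_iInf fun w => ?_)
    have h₁ : Nat.dist a.1 b.1 ≤ (w.map tensorProd.fst).length := pathGraph_dist_le_length _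
    have h₂ : Nat.dist a.2 b.2 ≤ (w.map tensorProd.snd).length := pathGraph_dist_le_length _
    rw [Walk.length_map] at h₁ h₂
    exact_mod_cast max_le h₁ h₂
  · refine edist_eq_top_of_not_reachable fun ⟨w⟩ => hpar ?_
    have h₁ : (w.map tensorProd.fst).length % 2 = Nat.dist a.1 b.1 % 2 :=
      pathGraph_length_mod_two _
    have h₂ : (w.map tensorProd.snd).length % 2 = Nat.dist a.2 b.2 % 2 :=
      pathGraph_length_mod_two _
    rw [Walk.length_map] at h₁ h₂
    rw [← h₁, ← h₂]

end TensorProd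

theorem kIndepNum_pathGraph (k : ℕ) : kIndepNum (pathGraph (k + 2)) k = 2 := by
  set ends : Finset (Fin (k + 2)) := {0, Fin.last (k + 1)}
  have hends : ∀ x ∈ ends, (x : ℕ) = 0 ∨ (x : ℕ) = k + 1 := by simp [ends]
  have hcard : ends.card = 2 := Finset.card_pair (by simp [Fin.ext_iff])
  have hfar : (pathGraph (k + 2)).IsKIndepSet k ends := by
    intro u hu v hv huv
    have := hends u hu
    have := hends v hv
    rw [Ne, Fin.ext_iff] at huv
    rw [pathGraph_edist, Nat.cast_lt]
    simp only [Nat.dist]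
    omega
  refine (kIndepNum_eq_card hfar fun t ht => ?_).trans hcard
  -- All vertices other than `0` lie within distance `k` of each other.
  refine (ht.card_le (t := Finset.range 2) (fun u => min (u : ℕ) 1) (fun u _ => by simp)
    fun u _ v _ huv => ?_).trans_eq (by rw [hcard, Finset.card_range])
  have := u.isLt
  have := v.isLt
  rw [pathGraph_edist, Nat.cast_le]
  simp only [Nat.dist] at huv ⊢
  omega

theorem kIndepNum_tensorProd_pathGraph {k : ℕ} (hk : Even k) :
    kIndepNum (tensorProd (pathGraph (k + 2)) (pathGraph (k + 2))) k = 4 := by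
  rw [Nat.even_iff] at hk
  have hm : 2 ≤ k + 2 := by omega
  set ends : Finset (Fin (k + 2)) := {0, Fin.last (k + 1)}
  have hends : ∀ x ∈ ends, (x : ℕ) = 0 ∨ (x : ℕ) = k + 1 := by simp [ends]
  have hcard : (ends ×ˢ ends).card = 4 := by
    rw [Finset.card_product, Finset.card_pair (by simp [Fin.ext_iff])]
  have hfar : (tensorProd (pathGraph (k + 2)) (pathGraph (k + 2))).IsKIndepSet k
      (ends ×ˢ ends : Finset _) := by
    intro u hu v hv huv
    rw [Finset.coe_product, Set.mem_prod] at hu hv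
    have := hends _ hu.1
    have := hends _ hu.2
    have := hends _ hv.1
    have := hends _ hv.2
    rw [Ne, Prod.ext_iff, Fin.ext_iff, Fin.ext_iff] at huv
    rw [edist_tensorProd_pathGraph hm hm]
    split_ifs with hpar
    · rw [Nat.cast_lt]
      simp only [Nat.dist] at hpar ⊢
      omega
    · exact ENat.natCast_lt_top k
  refine (kIndepNum_eq_card hfar fun t ht => ?_).trans hcard
  -- Two vertices in the same parity class are at distance at most `k`, as `k` is even.
  refine (ht.card_le (t := Finset.range 2 ×ˢ Finset.range 2)
    (fun u => ((u.1 : ℕ) % 2, (u.2 : ℕ) % 2)) (fun u _ => by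
      simp only [Finset.mem_product, Finset.mem_range]; omega)
    fun u _ v _ huv => ?_).trans_eq (by rw [hcard, Finset.card_product, Finset.card_range])
  have := u.1.isLt
  have := u.2.isLt
  have := v.1.isLt
  have := v.2.isLt
  rw [Prod.ext_iff] at huv
  rw [edist_tensorProd_pathGraph hm hm, if_pos (by simp only [Nat.dist]; omega), Nat.cast_le]
  simp only [Nat.dist]
  omega

theorem kIndepNum_tensorProd_path_general (k : ℕ) (hke : Even k) :
    kIndepNum (tensorProd (pathGraph (k + 2)) (pathGraph (k + 2))) k = 4 ∧
      4 = kIndepNum (pathGraph (k + 2)) k * kIndepNum (pathGraph (k + 2)) k :=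
  ⟨kIndepNum_tensorProd_pathGraph hke, by rw [kIndepNum_pathGraph]⟩

theorem kIndepNum_tensorProd_path (k : ℕ) (hk : 0 < k) (hke : Even k) :
    kIndepNum (tensorProd (pathGraph (k + 2)) (pathGraph (k + 2))) k = 4 ∧
      4 = kIndepNum (pathGraph (k + 2)) k * kIndepNum (pathGraph (k + 2)) k :=
  kIndepNum_tensorProd_path_general k hke
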